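/- arXiv:2110.03356 — 4 statements merged into one kernel-verified Lean document; each statement's English description precedes it below -/
import Mathlib

section
/- Let K be an algebraically closed field of characteristic p ≥ 0, let n ≥ 1 and s ≥ 0 be integers, and let μ_1,…,μ_s be integers with each μ_j ≥ 2. Let Γ = F_n ∗ ℤ/μ_1 ∗ ⋯ ∗ ℤ/μ_s be the free product of a free group of rank n with cyclic groups of orders μ_1,…,μ_s, and let γ_j be a generator of the j-th cyclic factor. Let ρ : Γ → K^× be a group homomorphism that is not the trivial character, set λ_j = ρ(γ_j), and let ℓ be the number of indices j ∈ {1,…,s} with λ_j = 1 and p ∤ μ_j. Then the first group cohomology of Γ with coefficients in the one-dimensional representation K_ρ satisfies dim_K H^1(Γ, K_ρ) = n + s − ℓ − 1. -/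
/-- Relations presenting the free product `F_n ∗ ℤ/μ₁ ∗ ⋯ ∗ ℤ/μ_s`: the generators
indexed by `Fin n` are free, and the generator `γ_j` satisfies `γ_j ^ μ_j = 1`. -/
def orbRels (n s : ℕ) (μ : Fin s → ℕ) : Set (FreeGroup (Fin n ⊕ Fin s)) :=
  Set.range fun j : Fin s => FreeGroup.of (Sum.inr j) ^ μ j

/-- The free product `Γ = F_n ∗ ℤ/μ₁ ∗ ⋯ ∗ ℤ/μ_s`. -/
abbrev OrbGroup (n s : ℕ) (μ : Fin s → ℕ) : Type := PresentedGroup (orbRels n s μ)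

/-- The generator `γ_j` of the `j`-th cyclic factor of `Γ`. -/
def orbGamma (n s : ℕ) (μ : Fin s → ℕ) (j : Fin s) : OrbGroup n s μ :=
  PresentedGroup.of (Sum.inr j)

/-- The one-dimensional representation `K_ρ` attached to a character `ρ : G → Kˣ`:
`g ∈ G` acts on `K` by multiplication by `ρ g`. -/
def charRep {K : Type} [CommRing K] {G : Type} [Group G] (ρ : G →* Kˣ) :
    Representation K G K where
  toFun g := (ρ g : K) • (1 : K →ₗ[K] K)
  map_one' := by simp
  map_mul' g h := by
    ext
    simp [mul_smul, mul_comm]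

/-! A 1-cocycle `f` with values in `K_ρ` is the same thing as a homomorphism
`g ↦ (x ↦ ρ(g) x + f(g))` from `Γ` to the affine group of `K` lifting `ρ`. By the presentation of
`Γ`, such a homomorphism may send the free generators anywhere, while `γ_j ^ μ_j = 1` imposes on
`f(γ_j)` exactly the condition `(1 + λ_j + ⋯ + λ_j ^ (μ_j - 1)) f(γ_j) = 0`. Since `λ_j ^ μ_j = 1`,
this coefficient vanishes unless `λ_j = 1` and `p ∤ μ_j`, so `dim Z¹ = n + s - ℓ`. As `ρ` is
nontrivial, `K_ρ` has no invariants and `dim B¹ = dim K_ρ = 1`. -/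

open groupCohomology Finset

section Affine

variable {k V : Type*} [Ring k] [AddCommGroup V] [Module k V]

lemma AffineEquiv.linear_pow (e : V ≃ᵃ[k] V) (m : ℕ) : (e ^ m).linear = e.linear ^ m :=
  map_pow AffineEquiv.linearHom e m

lemma AffineEquiv.pow_apply_zero (e : V ≃ᵃ[k] V) (m : ℕ) :
    (e ^ m) 0 = ∑ i ∈ range m, (e.linear ^ i) (e 0) := by
  induction m with
  | zero => simp
  | succ m ih =>
    have hvadd := (e ^ m).map_vadd 0 (e 0)
    rw [AffineEquiv.linear_pow] at hvadd
    rw [pow_succ, AffineEquiv.coe_mul, Function.comp_apply, sum_range_succ, ← ih]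
    simpa [vadd_eq_add, add_comm] using hvadd

lemma AffineEquiv.pow_eq_one_iff (e : V ≃ᵃ[k] V) (m : ℕ) :
    e ^ m = 1 ↔ e.linear ^ m = 1 ∧ ∑ i ∈ range m, (e.linear ^ i) (e 0) = 0 := by
  rw [← AffineEquiv.pow_apply_zero, ← AffineEquiv.linear_pow]
  refine ⟨fun h => ⟨by rw [h]; rfl, by simp [h]⟩, fun ⟨hlin, h0⟩ => ?_⟩
  refine AffineEquiv.toAffineMap_injective (AffineMap.ext_linear ?_ (p := 0) (by simpa using h0))
  simp only [AffineEquiv.linear_toAffineMap, hlin]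
  rfl

end Affine

namespace Representation

variable {k G V : Type*} [CommRing k] [Group G] [AddCommGroup V] [Module k V]

def linearEquivHom (ρ : Representation k G V) : G →* (V ≃ₗ[k] V) :=
  (LinearMap.GeneralLinearGroup.generalLinearEquiv k V).toMonoidHom.comp ρ.asGroupHom

@[simp]
lemma linearEquivHom_apply (ρ : Representation k G V) (g : G) (x : V) :
    ρ.linearEquivHom g x = ρ g x :=
  rfl

end Representation

namespace groupCohomology

section

variable {k G : Type} [CommRing k] [Group G] {A : Rep k G}

lemma cocycles₁_map_pow (f : cocycles₁ A) (g : G) (m : ℕ) :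
    f (g ^ m) = ∑ i ∈ range m, A.ρ (g ^ i) (f g) := by
  induction m with
  | zero => simp
  | succ m ih => rw [pow_succ, (mem_cocycles₁_iff f).1 f.2, ih, sum_range_succ, add_comm]

lemma cocycles₁_eq_zero_of_closure_eq_top {S : Set G} (hS : Subgroup.closure S = ⊤)
    (f : cocycles₁ A) (hf : ∀ g ∈ S, f g = 0) : f = 0 := by
  ext g
  have hg : g ∈ Subgroup.closure S := hS ▸ Subgroup.mem_top g
  show f g = 0
  induction hg using Subgroup.closure_induction with
  | mem g hg => exact hf g hg
  | one => exact cocycles₁_map_one f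
  | mul g h _ _ hg hh => rw [(mem_cocycles₁_iff f).1 f.2, hg, hh, map_zero, add_zero]
  | inv g _ hg =>
    exact (A.ρ.apply_bijective g).injective (by rw [cocycles₁_map_inv, hg, neg_zero, map_zero])

lemma mem_cocycles₁_of_affineEquiv (φ : G →* (A ≃ᵃ[k] A))
    (hφ : ∀ g, (φ g).linear = A.ρ.linearEquivHom g) : (fun g => φ g 0) ∈ cocycles₁ A := by
  refine (mem_cocycles₁_iff _).2 fun g h => ?_
  calc φ (g * h) 0 = φ g (φ h 0 +ᵥ (0 : A)) := by simp
    _ = A.ρ g (φ h 0) + φ g 0 := by rw [(φ g).map_vadd, hφ, vadd_eq_add]; rfl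

end

lemma finrank_H1_add_finrank_coboundaries₁ {K G : Type} [Field K] [Group G] (A : Rep K G)
    [FiniteDimensional K (cocycles₁ A)] :
    Module.finrank K (H1 A) + Module.finrank K (coboundaries₁ A) =
      Module.finrank K (cocycles₁ A) := by
  have hsurj : Function.Surjective (H1π A).hom :=
    (ModuleCat.epi_iff_surjective _).mp inferInstance
  have hker : LinearMap.ker (H1π A).hom = (coboundaries₁ A).comap (cocycles₁ A).subtype := by
    ext x
    exact H1π_eq_zero_iff x
  rw [← LinearMap.finrank_range_add_finrank_ker (H1π A).hom, LinearMap.range_eq_top.2 hsurj,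
    finrank_top, hker, (Submodule.comapSubtypeEquivOfLe (coboundaries₁_le_cocycles₁ A)).finrank_eq]

end groupCohomology

lemma geom_sum_eq_zero_iff_of_pow_eq_one {K : Type*} [Field K] {x : K} {m : ℕ} (hx : x ^ m = 1) :
    ∑ i ∈ range m, x ^ i = 0 ↔ (x = 1 → (m : K) = 0) := by
  by_cases h1 : x = 1
  · simp [h1]
  · simp [h1, geom_sum_eq h1, hx]

section charRep

variable {K G : Type} [Field K] [Group G] (ρ : G →* Kˣ)

@[simp]
lemma charRep_apply (g : G) (x : K) : charRep ρ g x = ρ g * x := rfl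

lemma invariants_charRep_eq_bot (hρ : ρ ≠ 1) : (charRep ρ).invariants = ⊥ := by
  obtain ⟨g, hg⟩ := DFunLike.ne_iff.mp hρ
  have hg' : (ρ g : K) - 1 ≠ 0 := sub_ne_zero.2 fun h => hg (Units.val_eq_one.1 h)
  refine eq_bot_iff.2 fun x hx => ?_
  have : ((ρ g : K) - 1) * x = 0 := by rw [sub_mul, one_mul, sub_eq_zero]; exact hx g
  exact (Submodule.mem_bot K).2 ((mul_eq_zero.1 this).resolve_left hg')

lemma finrank_coboundaries₁_charRep (hρ : ρ ≠ 1) :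
    Module.finrank K (coboundaries₁ (Rep.of (charRep ρ))) = 1 := by
  have hinj : Function.Injective (d₀₁ (Rep.of (charRep ρ))).hom := by
    rw [← LinearMap.ker_eq_bot, d₀₁_ker_eq_invariants, Rep.of_ρ, invariants_charRep_eq_bot ρ hρ]
  rw [coboundaries₁, LinearMap.finrank_range_of_inj hinj]
  exact Module.finrank_self K

end charRep

namespace OrbGroup

variable {n s : ℕ} {μ : Fin s → ℕ}

lemma orbGamma_pow_eq_one (j : Fin s) : orbGamma n s μ j ^ μ j = 1 :=
  (map_pow _ _ _).symm.trans (PresentedGroup.one_of_mem ⟨j, rfl⟩)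

section Cocycles

variable {k : Type} [CommRing k] (A : Rep k (OrbGroup n s μ))

def gammaNorm (j : Fin s) : Module.End k A :=
  ∑ i ∈ range (μ j), A.ρ (orbGamma n s μ j ^ i)

def evalGenerators :
    cocycles₁ A →ₗ[k] (Fin n → A) × ((j : Fin s) → LinearMap.ker (gammaNorm A j)) where
  toFun f := (fun a => f (PresentedGroup.of (.inl a)), fun j => ⟨f (orbGamma n s μ j), by
    rw [LinearMap.mem_ker, gammaNorm, LinearMap.sum_apply, ← cocycles₁_map_pow,
      orbGamma_pow_eq_one, cocycles₁_map_one]⟩)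
  map_add' _ _ := rfl
  map_smul' _ _ := rfl

lemma evalGenerators_injective : Function.Injective (evalGenerators A) := by
  rw [← LinearMap.ker_eq_bot, LinearMap.ker_eq_bot']
  intro f hf
  refine cocycles₁_eq_zero_of_closure_eq_top (PresentedGroup.closure_range_of _) f ?_
  rintro _ ⟨(a | j), rfl⟩
  · exact congrFun (congrArg Prod.fst hf) a
  · exact congrArg Subtype.val (congrFun (congrArg Prod.snd hf) j)

lemma evalGenerators_surjective : Function.Surjective (evalGenerators A) := by
  rintro ⟨v, w⟩
  let e : Fin n ⊕ Fin s → (A ≃ᵃ[k] A) := fun i =>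
    AffineEquiv.ofLinearEquiv (A.ρ.linearEquivHom (.of i)) 0 (Sum.elim v (fun j => (w j : A)) i)
  have hrel : ∀ r ∈ orbRels n s μ, FreeGroup.lift e r = 1 := by
    rintro _ ⟨j, rfl⟩
    rw [map_pow, FreeGroup.lift_apply_of, AffineEquiv.pow_eq_one_iff]
    refine ⟨?_, by simpa [← map_pow, gammaNorm, e, orbGamma] using (w j).2⟩
    rw [AffineEquiv.linear_ofLinearEquiv, ← map_pow]
    exact (congrArg _ (orbGamma_pow_eq_one j)).trans (map_one _)
  let φ := PresentedGroup.toGroup hrel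
  have hφ : AffineEquiv.linearHom.comp φ = A.ρ.linearEquivHom :=
    PresentedGroup.ext fun i => by simp [φ, e]
  refine ⟨⟨fun g => φ g 0, mem_cocycles₁_of_affineEquiv φ fun g => DFunLike.congr_fun hφ g⟩, ?_⟩
  ext <;> simp [evalGenerators, φ, e, orbGamma]

noncomputable def cocycles₁Equiv :
    cocycles₁ A ≃ₗ[k] (Fin n → A) × ((j : Fin s) → LinearMap.ker (gammaNorm A j)) :=
  LinearEquiv.ofBijective (evalGenerators A)
    ⟨evalGenerators_injective A, evalGenerators_surjective A⟩

end Cocycles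

variable {K : Type} [Field K]

instance (A : Rep K (OrbGroup n s μ)) [FiniteDimensional K A] :
    FiniteDimensional K (cocycles₁ A) :=
  (cocycles₁Equiv A).symm.finiteDimensional

lemma finrank_cocycles₁ (A : Rep K (OrbGroup n s μ)) [FiniteDimensional K A] :
    Module.finrank K (cocycles₁ A) =
      n * Module.finrank K A + ∑ j, Module.finrank K (LinearMap.ker (gammaNorm A j)) := by
  rw [(cocycles₁Equiv A).finrank_eq, Module.finrank_prod, Module.finrank_pi_fintype,
    Module.finrank_pi_fintype]
  simp

variable (ρ : OrbGroup n s μ →* Kˣ)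

open Classical in
lemma finrank_ker_gammaNorm_charRep (j : Fin s) :
    Module.finrank K (LinearMap.ker (gammaNorm (Rep.of (charRep ρ)) j)) =
      if ρ (orbGamma n s μ j) = 1 ∧ ¬ ringChar K ∣ μ j then 0 else 1 := by
  set c := ∑ i ∈ range (μ j), (ρ (orbGamma n s μ j) : K) ^ i
  have hnorm : gammaNorm (Rep.of (charRep ρ)) j = c • LinearMap.id := by
    ext
    simp only [gammaNorm, c, LinearMap.sum_apply, charRep_apply, LinearMap.smul_apply,
      LinearMap.id_apply, smul_eq_mul, Finset.sum_mul]
    simp only [map_pow, Units.val_pow_eq_pow_val]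
  have hpow : (ρ (orbGamma n s μ j) : K) ^ μ j = 1 := by
    rw [← Units.val_pow_eq_pow_val, ← map_pow, orbGamma_pow_eq_one, map_one, Units.val_one]
  have hc : c = 0 ↔ ¬(ρ (orbGamma n s μ j) = 1 ∧ ¬ringChar K ∣ μ j) := by
    rw [geom_sum_eq_zero_iff_of_pow_eq_one hpow, CharP.cast_eq_zero_iff K (ringChar K),
      Units.val_eq_one]
    tauto
  rw [hnorm]
  split_ifs with h
  · rw [LinearMap.ker_smul _ _ (mt hc.1 (not_not.2 h)), LinearMap.ker_id, finrank_bot]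
  · rw [hc.2 h, zero_smul, LinearMap.ker_zero, finrank_top, Module.finrank_self]

lemma finrank_cocycles₁_charRep :
    Module.finrank K (cocycles₁ (Rep.of (charRep ρ))) =
      n + (s - Nat.card {j : Fin s // ρ (orbGamma n s μ j) = 1 ∧ ¬ ringChar K ∣ μ j}) := by
  classical
  rw [finrank_cocycles₁, Finset.sum_congr rfl fun j _ => finrank_ker_gammaNorm_charRep ρ j]
  have hK : Module.finrank K (Rep.of (charRep ρ)) = 1 := Module.finrank_self K
  have hcompl := Fintype.card_subtype_compl
    fun j : Fin s => ρ (orbGamma n s μ j) = 1 ∧ ¬ringChar K ∣ μ j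
  rw [Fintype.card_fin] at hcompl
  rw [hK, mul_one, Nat.card_eq_fintype_card, ← hcompl, Fintype.card_subtype, Finset.card_filter]
  simp only [ite_not]

end OrbGroup

theorem stmt5_general (K : Type) [Field K] (n s : ℕ)
    (μ : Fin s → ℕ)
    (ρ : OrbGroup n s μ →* Kˣ) (hρ : ρ ≠ 1) :
    Module.finrank K (groupCohomology.H1 (Rep.of (charRep ρ))) =
      n + s - Nat.card {j : Fin s // ρ (orbGamma n s μ j) = 1 ∧ ¬ (ringChar K ∣ μ j)} - 1 := by
  have h := finrank_H1_add_finrank_coboundaries₁ (Rep.of (charRep ρ))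
  rw [finrank_coboundaries₁_charRep ρ hρ, OrbGroup.finrank_cocycles₁_charRep] at h
  have hℓ : Nat.card {j : Fin s // ρ (orbGamma n s μ j) = 1 ∧ ¬ (ringChar K ∣ μ j)} ≤ s :=
    (Finite.card_subtype_le _).trans_eq (Nat.card_eq_fintype_card.trans (Fintype.card_fin s))
  omega

/-- let `K` be an algebraically closed field of characteristic `p ≥ 0`,
`n ≥ 1`, `s ≥ 0`, `μ_j ≥ 2`, `Γ = F_n ∗ ℤ/μ₁ ∗ ⋯ ∗ ℤ/μ_s`, and `ρ : Γ → Kˣ` a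
nontrivial character.  With `ℓ = #{j | ρ(γ_j) = 1 and p ∤ μ_j}`, one has
`dim_K H¹(Γ, K_ρ) = n + s - ℓ - 1`. -/
theorem stmt5 (K : Type) [Field K] [IsAlgClosed K] (n s : ℕ) (hn : 1 ≤ n)
    (μ : Fin s → ℕ) (hμ : ∀ j, 2 ≤ μ j)
    (ρ : OrbGroup n s μ →* Kˣ) (hρ : ρ ≠ 1) :
    Module.finrank K (groupCohomology.H1 (Rep.of (charRep ρ))) =
      n + s - Nat.card {j : Fin s // ρ (orbGamma n s μ j) = 1 ∧ ¬ (ringChar K ∣ μ j)} - 1 :=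
  stmt5_general K n s μ ρ hρ
end

section
/- Let K be an algebraically closed field of characteristic p ≥ 0, let g ≥ 1 and s ≥ 0 be integers, and let μ_1,…,μ_s be integers with each μ_j ≥ 2. Let Γ be the group with presentation ⟨x_1,…,x_g, y_1,…,y_g, γ_1,…,γ_s | (∏_{i=1}^{g}[x_i,y_i])·γ_1⋯γ_s = 1, γ_j^{μ_j} = 1 for 1 ≤ j ≤ s⟩, and let ℓ be the number of indices j with p ∤ μ_j. Then the first group cohomology with trivial coefficients satisfies: dim_K H^1(Γ, K) = 2g + s − 1 − ℓ if ℓ < s, and dim_K H^1(Γ, K) = 2g if ℓ = s. -/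
open scoped commutatorElement

/-- Relations presenting the orbifold group of a closed genus-`g` surface with `s`
marked points of multiplicities `μ_j`: the surface relation
`(∏ i, [x_i, y_i]) · γ_1 ⋯ γ_s = 1` together with `γ_j ^ μ_j = 1` for all `j`.
The generator `Sum.inl (Sum.inl i)` is `x_i`, `Sum.inl (Sum.inr i)` is `y_i`, and
`Sum.inr j` is `γ_j`. -/
def surfRels (g s : ℕ) (μ : Fin s → ℕ) : Set (FreeGroup ((Fin g ⊕ Fin g) ⊕ Fin s)) :=
  (Set.range fun j : Fin s => FreeGroup.of (Sum.inr j) ^ μ j) ∪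
    {(List.ofFn fun i : Fin g =>
        ⁅FreeGroup.of (Sum.inl (Sum.inl i) : (Fin g ⊕ Fin g) ⊕ Fin s),
          FreeGroup.of (Sum.inl (Sum.inr i) : (Fin g ⊕ Fin g) ⊕ Fin s)⁆).prod *
      (List.ofFn fun j : Fin s => FreeGroup.of (Sum.inr j : (Fin g ⊕ Fin g) ⊕ Fin s)).prod}

/-- The orbifold group
`Γ = ⟨x_1,…,x_g, y_1,…,y_g, γ_1,…,γ_s ∣ (∏ i [x_i,y_i])·γ_1⋯γ_s = 1, γ_j^{μ_j} = 1⟩`. -/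
abbrev SurfOrbGroup (g s : ℕ) (μ : Fin s → ℕ) : Type := PresentedGroup (surfRels g s μ)

/-!
For trivial coefficients `H¹(Γ, K) = Hom(Γ, K)`, and a homomorphism from a presented group is
the same as values on the generators satisfying the relations. In the abelian group `K` the
commutators die, so the values on `x_i, y_i` are free, while the values `c_j` on `γ_j` only have
to satisfy `μ_j c_j = 0` and `∑ c_j = 0`. Since `μ_j c_j = 0` forces `c_j = 0` unless `p ∣ μ_j`,
the `c_j` range over the sum-zero hyperplane of `K^{s-ℓ}`, of dimension `s - ℓ - 1`, which
(read with truncated subtraction) is `0` when `ℓ = s`.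
-/

open Module Multiplicative

theorem Fintype.sum_eq_sum_subtype_of_eq_zero {ι M : Type*} [Fintype ι] [AddCommMonoid M]
    {P : ι → Prop} [DecidablePred P] {f : ι → M} (hf : ∀ i, ¬ P i → f i = 0) :
    ∑ i, f i = ∑ i : {i // P i}, f i := by
  rw [← Fintype.sum_subtype_add_sum_subtype P f,
    Fintype.sum_eq_zero (fun i : {i // ¬ P i} => f i) fun i => hf i i.2, add_zero]

theorem finrank_ker_linearCombination_one (K ι : Type*) [Field K] [Fintype ι] :
    finrank K (LinearMap.ker (Fintype.linearCombination K fun _ : ι => (1 : K))) =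
      Fintype.card ι - 1 := by
  rcases isEmpty_or_nonempty ι with hι | ⟨⟨i₀⟩⟩
  · rw [Fintype.card_eq_zero]
    exact finrank_zero_of_subsingleton
  · classical
    have hsurj : Function.Surjective (Fintype.linearCombination K fun _ : ι => (1 : K)) :=
      fun x => ⟨Pi.single i₀ x, by simp [Fintype.linearCombination_apply_single]⟩
    have h := LinearMap.finrank_range_add_finrank_ker
      (Fintype.linearCombination K fun _ : ι => (1 : K))
    rw [LinearMap.range_eq_top.2 hsurj, finrank_top, finrank_self,
      finrank_fintype_fun_eq_card] at h
    omega

namespace PresentedGroup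

variable {α : Type*} {rels : Set (FreeGroup α)} (R : Type*) {M : Type*} [Semiring R]
  [AddCommGroup M] [Module R M]

def evalOfₗ : (Additive (PresentedGroup rels) →+ M) →ₗ[R] (α → M) where
  toFun f x := f (.ofMul (.of x))
  map_add' _ _ := rfl
  map_smul' _ _ := rfl

theorem evalOfₗ_injective :
    Function.Injective (evalOfₗ R : (Additive (PresentedGroup rels) →+ M) →ₗ[R] (α → M)) :=
  fun _ _ h => AddMonoidHom.toMultiplicativeRight.injective <|
    PresentedGroup.ext fun x => congrArg ofAdd (congrFun h x)

theorem mem_range_evalOfₗ_iff {v : α → M} :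
    v ∈ LinearMap.range (evalOfₗ R : (Additive (PresentedGroup rels) →+ M) →ₗ[R] (α → M)) ↔
      ∀ r ∈ rels, FreeGroup.lift (fun x => ofAdd (v x)) r = 1 := by
  constructor
  · rintro ⟨f, rfl⟩ r hr
    rw [← FreeGroup.lift_unique (f := fun x => ofAdd (evalOfₗ R f x))
      ((AddMonoidHom.toMultiplicativeRight f).comp (mk rels)) fun _ => rfl,
      MonoidHom.comp_apply, one_of_mem hr, map_one]
  · intro h
    exact ⟨MonoidHom.toAdditiveLeft (toGroup h), funext fun x => congrArg toAdd (toGroup.of h)⟩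

end PresentedGroup

section SurfOrbGroup

variable (K : Type*) [Field K] {g s : ℕ} {μ : Fin s → ℕ}

theorem lift_surfRels_eq_one_iff {A : Type*} [AddCommGroup A]
    (v : (Fin g ⊕ Fin g) ⊕ Fin s → A) :
    (∀ r ∈ surfRels g s μ, FreeGroup.lift (fun x => ofAdd (v x)) r = 1) ↔
      (∀ j, μ j • v (.inr j) = 0) ∧ ∑ j, v (.inr j) = 0 := by
  have hcomm (a b : Multiplicative A) : ⁅a, b⁆ = 1 :=
    commutatorElement_eq_one_iff_mul_comm.2 (mul_comm a b)
  simp [surfRels, or_imp, forall_and, map_list_prod, List.prod_ofFn, map_commutatorElement, hcomm,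
    ← ofAdd_nsmul, ← ofAdd_sum, and_comm]

theorem mem_range_evalOfₗ_surfOrbGroup_iff {v : (Fin g ⊕ Fin g) ⊕ Fin s → K} :
    v ∈ LinearMap.range
        (PresentedGroup.evalOfₗ K : (Additive (SurfOrbGroup g s μ) →+ K) →ₗ[K] _) ↔
      (∀ j, ¬ ringChar K ∣ μ j → v (.inr j) = 0) ∧ ∑ j, v (.inr j) = 0 := by
  simp only [PresentedGroup.mem_range_evalOfₗ_iff, lift_surfRels_eq_one_iff, nsmul_eq_mul,
    mul_eq_zero, ← ringChar.spec K, or_iff_not_imp_left]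

variable (g μ)

noncomputable def surfCharEquiv :
    LinearMap.range
        (PresentedGroup.evalOfₗ K : (Additive (SurfOrbGroup g s μ) →+ K) →ₗ[K] _) ≃ₗ[K]
      (Fin g ⊕ Fin g → K) × LinearMap.ker
        (Fintype.linearCombination K fun _ : {j : Fin s // ringChar K ∣ μ j} => (1 : K)) where
  toFun v :=
    have hv := (mem_range_evalOfₗ_surfOrbGroup_iff K).1 v.2
    (fun i => v.1 (.inl i), ⟨fun t => v.1 (.inr t.1), by
      simpa [Fintype.linearCombination_apply, ← Fintype.sum_eq_sum_subtype_of_eq_zero hv.1]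
        using hv.2⟩)
  invFun a := ⟨Sum.elim a.1 fun j => if h : ringChar K ∣ μ j then a.2.1 ⟨j, h⟩ else 0, by
    refine (mem_range_evalOfₗ_surfOrbGroup_iff K).2 ⟨fun j hj => by simp [hj], ?_⟩
    calc ∑ j, (if h : ringChar K ∣ μ j then a.2.1 ⟨j, h⟩ else 0)
        = ∑ t : {j // ringChar K ∣ μ j}, (if h : ringChar K ∣ μ t then a.2.1 ⟨t, h⟩ else 0) :=
          Fintype.sum_eq_sum_subtype_of_eq_zero fun j hj => dif_neg hj
      _ = ∑ t, a.2.1 t := Fintype.sum_congr _ _ fun t => dif_pos t.2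
      _ = 0 := by
        simpa only [Fintype.linearCombination_apply, smul_eq_mul, mul_one] using
          LinearMap.mem_ker.1 a.2.2⟩
  map_add' _ _ := rfl
  map_smul' _ _ := rfl
  left_inv v := by
    have hv := (mem_range_evalOfₗ_surfOrbGroup_iff K).1 v.2
    ext (i | j)
    · rfl
    · by_cases hj : ringChar K ∣ μ j
      · simp [hj]
      · simp [hj, hv.1 j hj]
  right_inv a := by
    ext t
    · rfl
    · simp [t.2]

end SurfOrbGroup

theorem finrank_H1_surfOrbGroup (K : Type) [Field K] (g s : ℕ) (μ : Fin s → ℕ) :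
    finrank K (groupCohomology.H1 (Rep.trivial K (SurfOrbGroup g s μ) K)) =
      2 * g + (Fintype.card {j : Fin s // ringChar K ∣ μ j} - 1) := by
  rw [(groupCohomology.H1IsoOfIsTrivial
      (Rep.trivial K (SurfOrbGroup g s μ) K)).toLinearEquiv.finrank_eq,
    ← LinearMap.finrank_range_of_inj (PresentedGroup.evalOfₗ_injective K),
    (surfCharEquiv K g μ).finrank_eq, finrank_prod, finrank_ker_linearCombination_one,
    finrank_fintype_fun_eq_card, Fintype.card_sum, Fintype.card_fin, two_mul]

theorem stmt8_general (K : Type) [Field K] (g s : ℕ)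
    (μ : Fin s → ℕ) :
    (Nat.card {j : Fin s // ¬ (ringChar K ∣ μ j)} < s →
      Module.finrank K (groupCohomology.H1 (Rep.trivial K (SurfOrbGroup g s μ) K)) =
        2 * g + s - 1 - Nat.card {j : Fin s // ¬ (ringChar K ∣ μ j)}) ∧
    (Nat.card {j : Fin s // ¬ (ringChar K ∣ μ j)} = s →
      Module.finrank K (groupCohomology.H1 (Rep.trivial K (SurfOrbGroup g s μ) K)) =
        2 * g) := by
  have hcard : Nat.card {j : Fin s // ¬ ringChar K ∣ μ j} =
      s - Fintype.card {j : Fin s // ringChar K ∣ μ j} := by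
    rw [Nat.card_eq_fintype_card, Fintype.card_subtype_compl, Fintype.card_fin]
  have hle : Fintype.card {j : Fin s // ringChar K ∣ μ j} ≤ s :=
    (Fintype.card_subtype_le _).trans_eq (Fintype.card_fin s)
  rw [finrank_H1_surfOrbGroup, hcard]
  omega

/-- let `K` be an algebraically closed field of characteristic `p ≥ 0`,
`g ≥ 1`, `s ≥ 0`, `μ_j ≥ 2`, and `Γ` the compact-surface orbifold group above.
With `ℓ = #{j | p ∤ μ_j}`, the cohomology with trivial coefficients satisfies
`dim_K H¹(Γ, K) = 2g + s - 1 - ℓ` if `ℓ < s`, and `dim_K H¹(Γ, K) = 2g` if `ℓ = s`. -/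
theorem stmt8 (K : Type) [Field K] [IsAlgClosed K] (g s : ℕ) (hg : 1 ≤ g)
    (μ : Fin s → ℕ) (hμ : ∀ j, 2 ≤ μ j) :
    (Nat.card {j : Fin s // ¬ (ringChar K ∣ μ j)} < s →
      Module.finrank K (groupCohomology.H1 (Rep.trivial K (SurfOrbGroup g s μ) K)) =
        2 * g + s - 1 - Nat.card {j : Fin s // ¬ (ringChar K ∣ μ j)}) ∧
    (Nat.card {j : Fin s // ¬ (ringChar K ∣ μ j)} = s →
      Module.finrank K (groupCohomology.H1 (Rep.trivial K (SurfOrbGroup g s μ) K)) =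
        2 * g) :=
  stmt8_general K g s μ
end

section
/- Let K be an algebraically closed field, R = K[t, t^{-1}] the Laurent polynomial ring, and A an a×b matrix over R. Let r be the rank of A over the fraction field K(t) of R. For each positive integer N let R_N = R/(t^N − 1), a K-algebra of dimension N, and let A_N : R_N^b → R_N^a be the K-linear map induced by A. Then there exists a constant c, independent of N, such that for every positive integer N one has N·r − c ≤ rank_K(A_N) ≤ N·r. -/
set_option synthInstance.maxHeartbeats 1000000
set_option maxHeartbeats 2000000

/-- The ideal `(t^N - 1)` of the Laurent polynomial ring `R = K[t,t⁻¹]`, so that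
`R_N = R ⧸ (t^N - 1)` is an `N`-dimensional `K`-algebra. -/
noncomputable def tIdeal (K : Type) [Field K] (N : ℕ) : Ideal (LaurentPolynomial K) :=
  Ideal.span {(LaurentPolynomial.T 1 : LaurentPolynomial K) ^ N - 1}

/-- The `K`-linear map `R_N^b → R_N^a` induced by a matrix `A` over `R = K[t,t⁻¹]`,
where `R_N = R ⧸ (t^N - 1)`. -/
noncomputable def matrixModN {K : Type} [Field K] {a b : ℕ} (N : ℕ)
    (A : Matrix (Fin a) (Fin b) (LaurentPolynomial K)) :
    (Fin b → LaurentPolynomial K ⧸ tIdeal K N) →ₗ[K]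
      (Fin a → LaurentPolynomial K ⧸ tIdeal K N) :=
  (Matrix.mulVecLin (A.map (Ideal.Quotient.mk (tIdeal K N)))).restrictScalars K

/-!
Over the principal ideal domain `R = K[T;T⁻¹]`, the Smith normal form writes the column space of
`A` as that of `Q * diagonal D` with `Q` invertible. Hence the rank of `A` over `K(T)` is the
number of nonzero `D i`, and after reduction modulo `T ^ N - 1` the `K`-rank of `A_N` is
`∑ i, dim_K (D i • R_N)`. Each summand is at most `dim_K R_N = N`, and its codimension
`dim_K (R_N ⧸ (D i))` is bounded by `dim_K (R ⧸ (D i))`, which is finite for `D i ≠ 0` because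
`R ⧸ (d)` is a localization of an Artinian quotient of `K[X]`.
So `c = ∑ i, dim_K (R ⧸ (D i))` works.
-/

open Module

namespace LinearMap

variable {R ι : Type*} [Semiring R] {φ ψ : ι → Type*} [∀ i, AddCommMonoid (φ i)]
  [∀ i, Module R (φ i)] [∀ i, AddCommMonoid (ψ i)] [∀ i, Module R (ψ i)]

theorem range_piMap (f : ∀ i, φ i →ₗ[R] ψ i) :
    range (piMap f) = Submodule.pi Set.univ fun i => range (f i) := by
  ext y
  simp only [mem_range, Submodule.mem_pi, Set.mem_univ, forall_const, funext_iff, coe_piMap,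
    Pi.map_apply]
  exact ⟨fun ⟨x, hx⟩ i => ⟨x i, hx i⟩,
    fun h => ⟨fun i => (h i).choose, fun i => (h i).choose_spec⟩⟩

end LinearMap

theorem Submodule.finrank_pi_univ {K ι : Type*} [Field K] [Fintype ι] {V : ι → Type*}
    [∀ i, AddCommGroup (V i)] [∀ i, Module K (V i)] (W : ∀ i, Submodule K (V i))
    [∀ i, FiniteDimensional K (W i)] :
    finrank K (Submodule.pi Set.univ W) = ∑ i, finrank K (W i) := by
  have hW : Submodule.pi Set.univ W = LinearMap.range (LinearMap.piMap fun i => (W i).subtype) :=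
    by simp only [LinearMap.range_piMap, Submodule.range_subtype]
  rw [hW, LinearMap.finrank_range_of_inj, finrank_pi_fintype]
  exact Pi.map_injective.mpr fun i => Subtype.val_injective

namespace Matrix

variable {m n o R S : Type*} [Fintype n] [Fintype o] [CommRing R] [CommRing S]

theorem exists_eq_mul_of_range_mulVecLin_le {A : Matrix m o R} {B : Matrix m n R}
    (h : LinearMap.range A.mulVecLin ≤ LinearMap.range B.mulVecLin) :
    ∃ X : Matrix n o R, A = B * X := by
  have hcol : ∀ j, ∃ x, B *ᵥ x = A.col j := fun j =>
    h (by rw [range_mulVecLin]; exact Submodule.subset_span ⟨j, rfl⟩)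
  choose x hx using hcol
  refine ⟨of fun i j => x j i, ext fun i j => ?_⟩
  rw [← col_apply A j i, ← hx j]
  rfl

theorem range_mulVecLin_map_le (f : R →+* S) {A : Matrix m o R} {B : Matrix m n R}
    (h : LinearMap.range A.mulVecLin ≤ LinearMap.range B.mulVecLin) :
    LinearMap.range (A.map f).mulVecLin ≤ LinearMap.range (B.map f).mulVecLin := by
  obtain ⟨X, rfl⟩ := exists_eq_mul_of_range_mulVecLin_le h
  rw [Matrix.map_mul, mulVecLin_mul]
  exact LinearMap.range_comp_le_range _ _

theorem range_mulVecLin_map_eq (f : R →+* S) {A : Matrix m o R} {B : Matrix m n R}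
    (h : LinearMap.range A.mulVecLin = LinearMap.range B.mulVecLin) :
    LinearMap.range (A.map f).mulVecLin = LinearMap.range (B.map f).mulVecLin :=
  le_antisymm (range_mulVecLin_map_le f h.le) (range_mulVecLin_map_le f h.ge)

section Square

variable [Fintype m] [DecidableEq m]

theorem isUnit_det_map (f : R →+* S) {Q : Matrix m m R} (hQ : IsUnit Q.det) :
    IsUnit (Q.map f).det :=
  (RingHom.map_det f Q).symm ▸ hQ.map f

theorem rank_map_mul_diagonal {F : Type*} [Field F] {f : R →+* F} (hf : Function.Injective f)
    {Q : Matrix m m R} (hQ : IsUnit Q.det) (D : m → R) :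
    ((Q * diagonal D).map f).rank = Nat.card {i // D i ≠ 0} := by
  classical
  rw [Matrix.map_mul, diagonal_map (map_zero f),
    rank_mul_eq_right_of_isUnit_det _ _ (isUnit_det_map f hQ), rank_diagonal,
    ← Nat.card_eq_fintype_card]
  simp only [ne_eq, map_eq_zero_iff f hf]

variable {K : Type*} [Field K] [Algebra K S]

theorem finrank_range_restrictScalars_mul_of_isUnit_det {Q : Matrix m m S} (hQ : IsUnit Q.det)
    (B : Matrix m n S) :
    finrank K (LinearMap.range ((Q * B).mulVecLin.restrictScalars K)) =
      finrank K (LinearMap.range (B.mulVecLin.restrictScalars K)) := by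
  let e := (Q.toLinearEquiv' (Q.invertibleOfIsUnitDet hQ)).restrictScalars K
  have : (Q * B).mulVecLin.restrictScalars K = e.toLinearMap ∘ₗ B.mulVecLin.restrictScalars K :=
    by rw [mulVecLin_mul]; rfl
  rw [this, LinearMap.range_comp, e.finrank_map_eq]

theorem finrank_range_restrictScalars_diagonal [FiniteDimensional K S] (w : m → S) :
    finrank K (LinearMap.range ((diagonal w).mulVecLin.restrictScalars K)) =
      ∑ i, finrank K (LinearMap.range (LinearMap.mulLeft K (w i))) := by
  have : (diagonal w).mulVecLin.restrictScalars K =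
      LinearMap.piMap fun i => LinearMap.mulLeft K (w i) := by
    ext v i
    simp [mulVec_diagonal]
  rw [this, LinearMap.range_piMap, Submodule.finrank_pi_univ]

end Square

end Matrix

theorem Submodule.exists_isUnit_det_range_mulVecLin_mul_diagonal_eq {R ι : Type*}
    [CommRing R] [IsDomain R] [IsPrincipalIdealRing R] [Fintype ι] [DecidableEq ι]
    (M : Submodule R (ι → R)) :
    ∃ (Q : Matrix ι ι R) (D : ι → R),
      IsUnit Q.det ∧ LinearMap.range (Q * Matrix.diagonal D).mulVecLin = M := by
  obtain ⟨n, bM, bN, f, d, hsnf⟩ := M.smithNormalForm (Pi.basisFun R ι)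
  refine ⟨(Pi.basisFun R ι).toMatrix bM, Function.extend f d 0,
    Matrix.isUnit_det_of_right_inverse ((Pi.basisFun R ι).toMatrix_mul_toMatrix_flip bM), ?_⟩
  have hcol : ∀ j,
      ((Pi.basisFun R ι).toMatrix bM * Matrix.diagonal (Function.extend f d 0)).col j =
        Function.extend f d 0 j • bM j := by
    intro j; ext i
    simp [Matrix.mul_diagonal, Module.Basis.toMatrix_apply, mul_comm]
  rw [Matrix.range_mulVecLin]
  apply le_antisymm
  · rw [Submodule.span_le]
    rintro _ ⟨j, rfl⟩
    rw [SetLike.mem_coe, hcol]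
    by_cases hj : ∃ i, f i = j
    · obtain ⟨i, rfl⟩ := hj
      rw [f.injective.extend_apply, ← hsnf]
      exact (bN i).2
    · rw [Function.extend_apply' _ _ _ hj, Pi.zero_apply, zero_smul]
      exact M.zero_mem
  · intro x hx
    obtain ⟨y, rfl⟩ : ∃ y : M, (y : ι → R) = x := ⟨⟨x, hx⟩, rfl⟩
    rw [← bN.sum_repr y]
    simp only [Submodule.coe_sum, Submodule.coe_smul_of_tower]
    refine Submodule.sum_mem _ fun i _ =>
      Submodule.smul_mem _ _ (Submodule.subset_span ⟨f i, ?_⟩)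
    rw [hcol, f.injective.extend_apply, hsnf]

section QuotientSpan

variable {K R S : Type*} [Field K] [CommRing R] [CommRing S] [Algebra K R] [Algebra K S]

theorem finrank_range_mulLeft_add_finrank_quotient_span [FiniteDimensional K S] (x : S) :
    finrank K (LinearMap.range (LinearMap.mulLeft K x)) + finrank K (S ⧸ Ideal.span {x}) =
      finrank K S := by
  have hrange : LinearMap.range (LinearMap.mulLeft K x) = (Ideal.span {x}).restrictScalars K := by
    ext y
    simp [Ideal.mem_span_singleton', mul_comm]
  rw [hrange, ← (Submodule.Quotient.restrictScalarsEquiv K (Ideal.span {x})).finrank_eq, add_comm,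
    Submodule.finrank_quotient_add_finrank]

theorem finrank_quotient_span_map_le_of_surjective {f : R →ₐ[K] S}
    (hf : Function.Surjective f) (d : R) [FiniteDimensional K (R ⧸ Ideal.span {d})] :
    finrank K (S ⧸ Ideal.span {f d}) ≤ finrank K (R ⧸ Ideal.span {d}) := by
  have hle : Ideal.span {d} ≤ (Ideal.span {f d}).comap f := by
    rw [Ideal.span_le, Set.singleton_subset_iff]
    exact Ideal.subset_span rfl
  exact LinearMap.finrank_le_finrank_of_surjective
    (f := (Ideal.quotientMapₐ _ f hle).toLinearMap) (Ideal.quotientMap_surjective (H := hle) hf)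

end QuotientSpan

theorem IsLocalization.isPrincipalIdealRing {R S : Type*} [CommRing R] [IsPrincipalIdealRing R]
    [CommRing S] [Algebra R S] (M : Submonoid R) [IsLocalization M S] :
    IsPrincipalIdealRing S where
  principal J := by
    obtain ⟨g, hg⟩ := IsPrincipalIdealRing.principal (J.under R)
    refine ⟨⟨algebraMap R S g, ?_⟩⟩
    rw [← IsLocalization.map_under M S J, hg, Ideal.submodule_span_eq, Ideal.map_span,
      Set.image_singleton]

namespace LaurentPolynomial

open Polynomial

section Field

variable {K : Type*} [Field K]

instance : IsPrincipalIdealRing K[T;T⁻¹] :=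
  IsLocalization.isPrincipalIdealRing (Submonoid.powers (X : K[X]))

theorem span_toLaurent (p : K[X]) :
    Ideal.span {toLaurent p} = (Ideal.span {p}).map (algebraMap K[X] K[T;T⁻¹]) := by
  rw [Ideal.map_span, Set.image_singleton, algebraMap_eq_toLaurent]

variable (K) in
/-- `K[T;T⁻¹] ⧸ (p)` is the localization of `K[X] ⧸ (p)` away from `X`, and this is its
localization map. -/
noncomputable def ofQuotientSpan (p : K[X]) :
    K[X] ⧸ Ideal.span {p} →ₐ[K] K[T;T⁻¹] ⧸ (Ideal.span {p}).map (algebraMap K[X] K[T;T⁻¹]) :=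
  Ideal.quotientMapₐ _ toLaurentAlg Ideal.le_comap_map

theorem ofQuotientSpan_surjective {p : K[X]} (hp : p ≠ 0) :
    Function.Surjective (ofQuotientSpan K p) := by
  -- every localization of the Artinian ring `K[X] ⧸ (p)` is a quotient of it
  have : FiniteDimensional K (K[X] ⧸ Ideal.span {p}) := (AdjoinRoot.powerBasis hp).finite
  have : IsArtinianRing (K[X] ⧸ Ideal.span {p}) := IsArtinianRing.of_finite K _
  exact IsArtinianRing.localization_surjective
    (Algebra.algebraMapSubmonoid (K[X] ⧸ Ideal.span {p}) (Submonoid.powers (X : K[X]))) _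

theorem ofQuotientSpan_bijective {p : K[X]}
    (hX : IsUnit (Ideal.Quotient.mk (Ideal.span {p}) X)) :
    Function.Bijective (ofQuotientSpan K p) := by
  refine (IsLocalization.atUnits _
    (Algebra.algebraMapSubmonoid (K[X] ⧸ Ideal.span {p}) (Submonoid.powers (X : K[X])))
    (S := K[T;T⁻¹] ⧸ (Ideal.span {p}).map (algebraMap K[X] K[T;T⁻¹])) ?_).bijective
  rintro _ ⟨_, ⟨n, rfl⟩, rfl⟩
  exact hX.pow n

theorem finiteDimensional_quotient_span_toLaurent {p : K[X]} (hp : p ≠ 0) :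
    FiniteDimensional K (K[T;T⁻¹] ⧸ Ideal.span {toLaurent p}) := by
  have : FiniteDimensional K (K[X] ⧸ Ideal.span {p}) := (AdjoinRoot.powerBasis hp).finite
  rw [span_toLaurent]
  exact .of_surjective (ofQuotientSpan K p).toLinearMap (ofQuotientSpan_surjective hp)

theorem finrank_quotient_span_toLaurent {p : K[X]} (hp : p ≠ 0)
    (hX : IsUnit (Ideal.Quotient.mk (Ideal.span {p}) X)) :
    finrank K (K[T;T⁻¹] ⧸ Ideal.span {toLaurent p}) = p.natDegree := by
  rw [span_toLaurent, ← (LinearEquiv.ofBijective (ofQuotientSpan K p).toLinearMap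
    (ofQuotientSpan_bijective hX)).finrank_eq]
  exact (AdjoinRoot.powerBasis hp).finrank

theorem finiteDimensional_quotient_span {d : K[T;T⁻¹]} (hd : d ≠ 0) :
    FiniteDimensional K (K[T;T⁻¹] ⧸ Ideal.span {d}) := by
  obtain ⟨n, p, hp⟩ := d.exists_T_pow
  have hp0 : p ≠ 0 := by
    rintro rfl
    exact mul_ne_zero hd (isUnit_T _).ne_zero (by rw [← hp, map_zero])
  rw [← Ideal.span_singleton_mul_right_unit (isUnit_T n), ← hp]
  exact finiteDimensional_quotient_span_toLaurent hp0

end Field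

variable {K : Type} [Field K]

theorem tIdeal_eq_span_toLaurent (N : ℕ) :
    tIdeal K N = Ideal.span {toLaurent ((X : K[X]) ^ N - 1)} := by
  rw [tIdeal, map_sub, map_pow, toLaurent_X, map_one]

variable {N : ℕ}

theorem finiteDimensional_quotient_tIdeal (hN : 0 < N) :
    FiniteDimensional K (K[T;T⁻¹] ⧸ tIdeal K N) := by
  rw [tIdeal_eq_span_toLaurent]
  exact finiteDimensional_quotient_span_toLaurent (by simpa using X_pow_sub_C_ne_zero hN (1 : K))

theorem finrank_quotient_tIdeal (hN : 0 < N) : finrank K (K[T;T⁻¹] ⧸ tIdeal K N) = N := by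
  have hX : IsUnit (Ideal.Quotient.mk (Ideal.span {(X : K[X]) ^ N - 1}) X) := by
    refine IsUnit.of_mul_eq_one (Ideal.Quotient.mk _ (X ^ (N - 1))) ?_
    rw [← map_mul, ← pow_succ', Nat.sub_add_cancel hN, ← map_one (Ideal.Quotient.mk _),
      Ideal.Quotient.eq, Ideal.mem_span_singleton]
  rw [tIdeal_eq_span_toLaurent,
    finrank_quotient_span_toLaurent (by simpa using X_pow_sub_C_ne_zero hN (1 : K)) hX]
  simpa using natDegree_X_pow_sub_C (n := N) (r := (1 : K))

theorem finrank_range_mulLeft_mk_tIdeal_le (hN : 0 < N) (d : K[T;T⁻¹]) :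
    finrank K (LinearMap.range (LinearMap.mulLeft K (Ideal.Quotient.mk (tIdeal K N) d))) ≤ N := by
  have := finiteDimensional_quotient_tIdeal (K := K) hN
  exact (LinearMap.finrank_range_le _).trans (finrank_quotient_tIdeal hN).le

theorem le_finrank_range_mulLeft_mk_tIdeal_add (hN : 0 < N) {d : K[T;T⁻¹]} (hd : d ≠ 0) :
    N ≤ finrank K (LinearMap.range (LinearMap.mulLeft K (Ideal.Quotient.mk (tIdeal K N) d))) +
      finrank K (K[T;T⁻¹] ⧸ Ideal.span {d}) := by
  have := finiteDimensional_quotient_tIdeal (K := K) hN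
  have := finiteDimensional_quotient_span hd
  have hsum := finrank_range_mulLeft_add_finrank_quotient_span (K := K)
    (Ideal.Quotient.mk (tIdeal K N) d)
  have hquot := finrank_quotient_span_map_le_of_surjective
    (f := Ideal.Quotient.mkₐ K (tIdeal K N)) Ideal.Quotient.mk_surjective d
  rw [finrank_quotient_tIdeal hN] at hsum
  rw [Ideal.Quotient.mkₐ_eq_mk] at hquot
  omega

variable {ι : Type*} [Fintype ι]

theorem sum_finrank_range_mulLeft_mk_tIdeal_le (hN : 0 < N) (D : ι → K[T;T⁻¹]) :
    ∑ i, finrank K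
        (LinearMap.range (LinearMap.mulLeft K (Ideal.Quotient.mk (tIdeal K N) (D i)))) ≤
      N * Nat.card {i // D i ≠ 0} := by
  classical
  rw [Nat.card_eq_fintype_card, Fintype.card_subtype, mul_comm, ← smul_eq_mul, ← Finset.sum_const,
    Finset.sum_filter]
  refine Finset.sum_le_sum fun i _ => ?_
  split_ifs with hi
  · exact finrank_range_mulLeft_mk_tIdeal_le hN (D i)
  · rw [not_not.mp hi, map_zero, LinearMap.mulLeft_zero_eq_zero, LinearMap.range_zero, finrank_bot]

theorem le_sum_finrank_range_mulLeft_mk_tIdeal_add (hN : 0 < N) (D : ι → K[T;T⁻¹]) :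
    N * Nat.card {i // D i ≠ 0} ≤
      ∑ i, finrank K
          (LinearMap.range (LinearMap.mulLeft K (Ideal.Quotient.mk (tIdeal K N) (D i)))) +
        ∑ i, finrank K (K[T;T⁻¹] ⧸ Ideal.span {D i}) := by
  classical
  rw [Nat.card_eq_fintype_card, Fintype.card_subtype, mul_comm, ← smul_eq_mul, ← Finset.sum_const,
    Finset.sum_filter, ← Finset.sum_add_distrib]
  refine Finset.sum_le_sum fun i _ => ?_
  split_ifs with hi
  · exact le_finrank_range_mulLeft_mk_tIdeal_add hN hi
  · exact Nat.zero_le _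

end LaurentPolynomial

theorem stmt11_general (K : Type) [Field K] (a b : ℕ)
    (A : Matrix (Fin a) (Fin b) (LaurentPolynomial K)) :
    ∃ c : ℕ, ∀ N : ℕ, 0 < N →
      N * (A.map (algebraMap (LaurentPolynomial K)
            (FractionRing (LaurentPolynomial K)))).rank - c ≤
          Module.finrank K (LinearMap.range (matrixModN N A)) ∧
        Module.finrank K (LinearMap.range (matrixModN N A)) ≤
          N * (A.map (algebraMap (LaurentPolynomial K)
            (FractionRing (LaurentPolynomial K)))).rank := by
  open LaurentPolynomial Matrix in
  obtain ⟨Q, D, hQ, hQD⟩ :=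
    (LinearMap.range A.mulVecLin).exists_isUnit_det_range_mulVecLin_mul_diagonal_eq
  have hrank : (A.map (algebraMap K[T;T⁻¹] (FractionRing K[T;T⁻¹]))).rank =
      Nat.card {i // D i ≠ 0} := by
    rw [rank, range_mulVecLin_map_eq _ hQD.symm, ← rank]
    exact rank_map_mul_diagonal (IsFractionRing.injective _ _) hQ D
  refine ⟨∑ i, finrank K (K[T;T⁻¹] ⧸ Ideal.span {D i}), fun N hN => ?_⟩
  have := finiteDimensional_quotient_tIdeal (K := K) hN
  have hfinrank : finrank K (LinearMap.range (matrixModN N A)) = ∑ i,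
      finrank K (LinearMap.range (LinearMap.mulLeft K (Ideal.Quotient.mk (tIdeal K N) (D i)))) := by
    rw [matrixModN, LinearMap.range_restrictScalars, range_mulVecLin_map_eq _ hQD.symm,
      ← LinearMap.range_restrictScalars, Matrix.map_mul, diagonal_map (map_zero _),
      finrank_range_restrictScalars_mul_of_isUnit_det (isUnit_det_map _ hQ),
      finrank_range_restrictScalars_diagonal]
  rw [hrank, hfinrank]
  exact ⟨tsub_le_iff_right.mpr (le_sum_finrank_range_mulLeft_mk_tIdeal_add hN D),
    sum_finrank_range_mulLeft_mk_tIdeal_le hN D⟩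

/-- let `K` be an algebraically closed field, `R = K[t,t⁻¹]`, `A` an
`a × b` matrix over `R` of rank `r` over the fraction field `K(t)`, and for `N ≥ 1`
let `A_N : R_N^b → R_N^a` be the induced `K`-linear map, where `R_N = R/(t^N - 1)`.
Then there is a constant `c`, independent of `N`, with
`N·r - c ≤ rank_K A_N ≤ N·r` for all `N ≥ 1`. -/
theorem stmt11 (K : Type) [Field K] [IsAlgClosed K] (a b : ℕ)
    (A : Matrix (Fin a) (Fin b) (LaurentPolynomial K)) :
    ∃ c : ℕ, ∀ N : ℕ, 0 < N →
      N * (A.map (algebraMap (LaurentPolynomial K)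
            (FractionRing (LaurentPolynomial K)))).rank - c ≤
          Module.finrank K (LinearMap.range (matrixModN N A)) ∧
        Module.finrank K (LinearMap.range (matrixModN N A)) ≤
          N * (A.map (algebraMap (LaurentPolynomial K)
            (FractionRing (LaurentPolynomial K)))).rank :=
  stmt11_general K a b A
end

section
/- Let A, B, C, D be abelian groups and let g₁ : A → B, g₂ : B → C, h₁ : D → B, h₂ : B → ℤ be group homomorphisms satisfying: h₂ is surjective, the image of g₁ equals the kernel of h₂, g₂ is surjective, g₂ ∘ h₁ = 0, and the image of h₂ ∘ h₁ equals μℤ for a positive integer μ. Then there is a surjective homomorphism from ℤ/μℤ onto the cokernel C/im(g₂ ∘ g₁); in particular, the cokernel of g₂ ∘ g₁ has at most μ elements. -/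
/-- let `A, B, C, D` be abelian groups with homomorphisms
`g₁ : A → B`, `g₂ : B → C`, `h₁ : D → B`, `h₂ : B → ℤ` such that `h₂` is surjective,
`im g₁ = ker h₂`, `g₂` is surjective, `g₂ ∘ h₁ = 0`, and `im (h₂ ∘ h₁) = μℤ` for a
positive integer `μ`.  Then `ℤ/μℤ` surjects onto `coker (g₂ ∘ g₁)`; in particular
the cokernel of `g₂ ∘ g₁` has at most `μ` elements. -/
theorem stmt14 (A B C D : Type*) [AddCommGroup A] [AddCommGroup B] [AddCommGroup C]
    [AddCommGroup D] (g₁ : A →+ B) (g₂ : B →+ C) (h₁ : D →+ B) (h₂ : B →+ ℤ)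
    (μ : ℕ) (hμ : 0 < μ)
    (hh₂ : Function.Surjective h₂)
    (hexact : g₁.range = h₂.ker)
    (hg₂ : Function.Surjective g₂)
    (hcomp : g₂.comp h₁ = 0)
    (him : (h₂.comp h₁).range = AddSubgroup.zmultiples (μ : ℤ)) :
    (∃ φ : ZMod μ →+ C ⧸ (g₂.comp g₁).range, Function.Surjective φ) ∧
      Nat.card (C ⧸ (g₂.comp g₁).range) ≤ μ := by
  haveI : NeZero μ := ⟨hμ.ne'⟩
  set R := (g₂.comp g₁).range
  -- the projection B → coker
  let f : B →+ C ⧸ R := (QuotientAddGroup.mk' R).comp g₂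
  have hf : Function.Surjective f :=
    (QuotientAddGroup.mk'_surjective R).comp hg₂
  -- choose b₀ with h₂ b₀ = 1
  obtain ⟨b₀, hb₀⟩ := hh₂ 1
  -- ψ : ℤ → coker, n ↦ n • f b₀
  let ψ : ℤ →+ C ⧸ R := (zmultiplesHom _) (f b₀)
  -- key: ψ (h₂ b) = f b for all b
  have key : ∀ b : B, ψ (h₂ b) = f b := by
    intro b
    have hk : b - (h₂ b) • b₀ ∈ h₂.ker := by
      simp [AddMonoidHom.mem_ker, hb₀]
    rw [← hexact] at hk
    obtain ⟨a, ha⟩ := hk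
    have : f (b - (h₂ b) • b₀) = 0 := by
      rw [← ha]
      simp only [f, AddMonoidHom.comp_apply, QuotientAddGroup.mk'_apply,
        QuotientAddGroup.eq_zero_iff]
      exact ⟨a, rfl⟩
    have h2 : f b = (h₂ b) • f b₀ := by
      have := (map_sub f b ((h₂ b) • b₀)).symm.trans this
      rw [map_zsmul] at this
      linear_combination (norm := abel) this
    simpa [ψ, zmultiplesHom_apply] using h2.symm
  have hψ : Function.Surjective ψ := by
    intro c
    obtain ⟨b, rfl⟩ := hf c
    exact ⟨h₂ b, key b⟩
  -- ψ kills μ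
  have hψμ : ψ (μ : ℤ) = 0 := by
    have : (μ : ℤ) ∈ (h₂.comp h₁).range := by
      rw [him]; exact AddSubgroup.mem_zmultiples _
    obtain ⟨d, hd⟩ := this
    have : ψ (h₂ (h₁ d)) = f (h₁ d) := key (h₁ d)
    rw [AddMonoidHom.comp_apply] at hd
    rw [hd] at this
    rw [this]
    have : g₂ (h₁ d) = 0 := by
      have := congrArg (fun k => k d) hcomp
      simpa using this
    simp [f, this]
  -- descend to ZMod μ
  have hφ : Function.Surjective (ZMod.lift μ ⟨ψ, hψμ⟩) := by
    intro c
    obtain ⟨n, hn⟩ := hψ c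
    exact ⟨(n : ZMod μ), by simpa using hn⟩
  refine ⟨⟨_, hφ⟩, ?_⟩
  calc Nat.card (C ⧸ R) ≤ Nat.card (ZMod μ) := Nat.card_le_card_of_surjective _ hφ
    _ = μ := Nat.card_zmod μ
end
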